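/- Let f : ℝ^e → M_{e,d}(ℝ) be bounded and Lipschitz with constant L (both ‖f‖_∞ ≤ L and Lip(f) ≤ L), and let x, x* : [0,T] → ℝ^e be continuous of finite p-variation with x(0) = x*(0). Then for every 0 ≤ u ≤ v ≤ T, assuming f is C¹ with ‖Df‖_∞ ≤ L and Df Lipschitz with constant L, ‖(f∘x)(v) - (f∘x)(u) - (f∘x*)(v) + (f∘x*)(u)‖ ≤ L(‖x - x*‖_{p-var,[u,v]} + 2‖x*‖_{p-var,[u,v]} ‖x - x*‖_{p-var,[0,T]}). -/

import Mathlib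

/-!
Put `c = x*(v) - x*(u)` and `g = f (· + c) - f`. Then
`f(x v) - f(x u) - f(x* v) + f(x* u) = (f(x v) - f(x u + c)) + (g(x u) - g(x* u))`.
The first term is at most `L ‖(x - x*)(u,v)‖` since `f` is `L`-Lipschitz; the second is at most
`L ‖c‖ ‖(x - x*)(u)‖` by the mean value inequality, because `Dg = Df(· + c) - Df` is bounded by
`L ‖c‖`. Every increment is bounded by the corresponding `p`-variation, and `(x - x*)(0) = 0`.
-/

open scoped BigOperators

noncomputable section

/-- `π` is a dissection of the interval `[s,t]`. -/
def IsDissection (s t : ℝ) (π : List ℝ) : Prop :=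
  List.Chain' (· < ·) π ∧ π.head? = some s ∧ π.getLast? = some t

/-- The sum `∑ ‖x(t_{k+1}) - x(t_k)‖^p` along a dissection. -/
def varSum (p : ℝ) {E : Type*} [NormedAddCommGroup E] (x : ℝ → E) (π : List ℝ) : ℝ :=
  ((π.zip π.tail).map (fun q => ‖x q.2 - x q.1‖ ^ p)).sum

/-- The `p`-variation seminorm of `x` on `[s,t]`. -/
def pVar (p : ℝ) {E : Type*} [NormedAddCommGroup E] (x : ℝ → E) (s t : ℝ) : ℝ :=
  sSup {v | ∃ π, IsDissection s t π ∧ v = varSum p x π ^ (1 / p)}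

/-- `x` has finite `p`-variation on `[s,t]`. -/
def HasFiniteVar (p : ℝ) {E : Type*} [NormedAddCommGroup E] (x : ℝ → E) (s t : ℝ) : Prop :=
  BddAbove {v | ∃ π, IsDissection s t π ∧ v = varSum p x π ^ (1 / p)}

section PVariation

variable {E : Type*} [NormedAddCommGroup E] {p : ℝ} {x : ℝ → E} {s t : ℝ} {π : List ℝ}

lemma varSum_nonneg (p : ℝ) (x : ℝ → E) (π : List ℝ) : 0 ≤ varSum p x π :=
  List.sum_nonneg fun _ hq => by
    obtain ⟨_, _, rfl⟩ := List.mem_map.mp hq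
    positivity

lemma pVar_nonneg (p : ℝ) (x : ℝ → E) (s t : ℝ) : 0 ≤ pVar p x s t :=
  Real.sSup_nonneg fun _ ⟨π, _, hv⟩ => hv ▸ Real.rpow_nonneg (varSum_nonneg p x π) _

@[simp]
lemma varSum_nil (p : ℝ) (x : ℝ → E) : varSum p x [] = 0 := rfl

@[simp]
lemma varSum_singleton (p : ℝ) (x : ℝ → E) (a : ℝ) : varSum p x [a] = 0 := by
  simp [varSum]

@[simp]
lemma varSum_cons_cons (p : ℝ) (x : ℝ → E) (a b : ℝ) (l : List ℝ) :
    varSum p x (a :: b :: l) = ‖x b - x a‖ ^ p + varSum p x (b :: l) := by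
  simp [varSum]

lemma varSum_le_varSum_cons (a : ℝ) (hπ : π ≠ []) : varSum p x π ≤ varSum p x (a :: π) := by
  obtain ⟨b, l, rfl⟩ := List.exists_cons_of_ne_nil hπ
  rw [varSum_cons_cons]
  exact le_add_of_nonneg_left (by positivity)

lemma varSum_le_varSum_concat (π : List ℝ) (b : ℝ) : varSum p x π ≤ varSum p x (π ++ [b]) := by
  induction π with
  | nil => simp
  | cons a l ih =>
    cases l with
    | nil => simpa using varSum_nonneg p x [a, b]
    | cons c l => simpa using ih

lemma IsDissection.ne_nil (hπ : IsDissection s t π) : π ≠ [] := by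
  rintro rfl
  simp [IsDissection] at hπ

lemma IsDissection.cons {a : ℝ} (hπ : IsDissection s t π) (has : a < s) :
    IsDissection a t (a :: π) := by
  obtain ⟨b, l, rfl⟩ := List.exists_cons_of_ne_nil hπ.ne_nil
  obtain ⟨hchain, hhead, hlast⟩ := hπ
  simp only [List.head?_cons, Option.some.injEq] at hhead
  subst hhead
  exact ⟨List.IsChain.cons_cons has hchain, rfl, by rwa [List.getLast?_cons_cons]⟩

lemma IsDissection.concat {b : ℝ} (hπ : IsDissection s t π) (htb : t < b) :
    IsDissection s b (π ++ [b]) := by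
  obtain ⟨hchain, hhead, hlast⟩ := hπ
  refine ⟨List.isChain_append.mpr ⟨hchain, List.isChain_singleton b, ?_⟩, ?_, by simp⟩
  · simp_all
  · rw [List.head?_append, hhead]; rfl

lemma IsDissection.exists_extend {a b : ℝ} (hπ : IsDissection s t π) (has : a ≤ s)
    (htb : t ≤ b) : ∃ π', IsDissection a b π' ∧ varSum p x π ≤ varSum p x π' := by
  obtain ⟨π₁, hπ₁, hle₁⟩ : ∃ π₁, IsDissection s b π₁ ∧ varSum p x π ≤ varSum p x π₁ := by
    rcases htb.eq_or_lt with rfl | htb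
    · exact ⟨π, hπ, le_rfl⟩
    · exact ⟨_, hπ.concat htb, varSum_le_varSum_concat π b⟩
  rcases has.eq_or_lt with rfl | has
  · exact ⟨π₁, hπ₁, hle₁⟩
  · exact ⟨_, hπ₁.cons has, hle₁.trans (varSum_le_varSum_cons a hπ₁.ne_nil)⟩

lemma varSum_rpow_le_pVar {a b : ℝ} (hp : 0 ≤ p) (hfin : HasFiniteVar p x a b)
    (hπ : IsDissection s t π) (has : a ≤ s) (htb : t ≤ b) :
    varSum p x π ^ (1 / p) ≤ pVar p x a b := by
  obtain ⟨π', hπ', hle⟩ := hπ.exists_extend (x := x) has htb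
  calc varSum p x π ^ (1 / p) ≤ varSum p x π' ^ (1 / p) := by
        gcongr
        exact varSum_nonneg p x π
    _ ≤ pVar p x a b := le_csSup hfin ⟨π', hπ', rfl⟩

lemma HasFiniteVar.mono {a b : ℝ} (hp : 0 ≤ p) (hfin : HasFiniteVar p x a b) (has : a ≤ s)
    (htb : t ≤ b) : HasFiniteVar p x s t :=
  ⟨pVar p x a b, fun _ ⟨_, hπ, hv⟩ => hv ▸ varSum_rpow_le_pVar hp hfin hπ has htb⟩

lemma norm_sub_le_pVar {a b : ℝ} (hp : 0 < p) (hfin : HasFiniteVar p x a b) (has : a ≤ s)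
    (hst : s ≤ t) (htb : t ≤ b) : ‖x t - x s‖ ≤ pVar p x a b := by
  rcases hst.eq_or_lt with rfl | hst
  · simpa using pVar_nonneg p x a b
  have hπ : IsDissection s t [s, t] := ⟨List.isChain_pair.mpr hst, rfl, rfl⟩
  have hsum : varSum p x [s, t] ^ (1 / p) = ‖x t - x s‖ := by
    simp [← Real.rpow_mul (norm_nonneg _), hp.ne']
  exact hsum ▸ varSum_rpow_le_pVar hp.le hfin hπ has htb

lemma varSum_sub_rpow_le (hp : 1 ≤ p) (x y : ℝ → E) (π : List ℝ) :
    varSum p (fun t => x t - y t) π ^ (1 / p) ≤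
      varSum p x π ^ (1 / p) + varSum p y π ^ (1 / p) := by
  set m := π.zip π.tail
  simp only [varSum, ← Fin.sum_univ_fun_getElem]
  calc (∑ i : Fin m.length, ‖(x m[i].2 - y m[i].2) - (x m[i].1 - y m[i].1)‖ ^ p) ^ (1 / p)
      ≤ (∑ i : Fin m.length, (‖x m[i].2 - x m[i].1‖ + ‖y m[i].2 - y m[i].1‖) ^ p) ^ (1 / p) := by
        gcongr with i
        rw [sub_sub_sub_comm]
        exact norm_sub_le _ _
    _ ≤ _ := Real.Lp_add_le_of_nonneg _ hp (fun _ _ => norm_nonneg _) (fun _ _ => norm_nonneg _)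

lemma HasFiniteVar.sub {y : ℝ → E} (hp : 1 ≤ p) (hx : HasFiniteVar p x s t)
    (hy : HasFiniteVar p y s t) : HasFiniteVar p (fun r => x r - y r) s t := by
  obtain ⟨Bx, hBx⟩ := hx
  obtain ⟨By, hBy⟩ := hy
  exact ⟨Bx + By, fun _ ⟨π, hπ, hv⟩ =>
    hv ▸ (varSum_sub_rpow_le hp x y π).trans (add_le_add (hBx ⟨π, hπ, rfl⟩) (hBy ⟨π, hπ, rfl⟩))⟩

end PVariation

section Increments

variable {E F : Type*} [NormedAddCommGroup E] [NormedSpace ℝ E] [NormedAddCommGroup F]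
  [NormedSpace ℝ F] {f : E → F} {L : ℝ}

lemma norm_sub_sub_shift_le (hf : Differentiable ℝ f)
    (hDf : ∀ v w, ‖fderiv ℝ f v - fderiv ℝ f w‖ ≤ L * ‖v - w‖) (c a b : E) :
    ‖(f (a + c) - f a) - (f (b + c) - f b)‖ ≤ L * ‖c‖ * ‖a - b‖ := by
  have hderiv (y : E) :
      HasFDerivAt (fun z => f (z + c) - f z) (fderiv ℝ f (y + c) - fderiv ℝ f y) y :=
    ((hf (y + c)).hasFDerivAt.comp y ((hasFDerivAt_id y).add_const c)).sub (hf y).hasFDerivAt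
  have hbound (y : E) : ‖fderiv ℝ f (y + c) - fderiv ℝ f y‖ ≤ L * ‖c‖ := by
    simpa using hDf (y + c) y
  exact convex_univ.norm_image_sub_le_of_norm_hasFDerivWithin_le
    (fun y _ => (hderiv y).hasFDerivWithinAt) (fun y _ => hbound y) (Set.mem_univ b)
    (Set.mem_univ a)

lemma norm_sub_sub_add_le_of_lipschitz_fderiv (hf : Differentiable ℝ f)
    (hflip : ∀ v w, ‖f v - f w‖ ≤ L * ‖v - w‖)
    (hDf : ∀ v w, ‖fderiv ℝ f v - fderiv ℝ f w‖ ≤ L * ‖v - w‖) (a b a' b' : E) :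
    ‖f b - f a - f b' + f a'‖ ≤ L * ‖(b - b') - (a - a')‖ + L * ‖b' - a'‖ * ‖a - a'‖ := by
  set c := b' - a'
  have hb' : a' + c = b' := add_sub_cancel a' b'
  have hsplit : f b - f a - f b' + f a' =
      (f b - f (a + c)) + ((f (a + c) - f a) - (f (a' + c) - f a')) := by
    rw [hb']; abel
  have hfirst : b - (a + c) = (b - b') - (a - a') := by simp only [c]; abel
  calc ‖f b - f a - f b' + f a'‖
      ≤ ‖f b - f (a + c)‖ + ‖(f (a + c) - f a) - (f (a' + c) - f a')‖ :=
        hsplit ▸ norm_add_le _ _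
    _ ≤ L * ‖(b - b') - (a - a')‖ + L * ‖c‖ * ‖a - a'‖ :=
        add_le_add (hfirst ▸ hflip _ _) (norm_sub_sub_shift_le hf hDf c a a')

end Increments

theorem composition_difference_estimate_general
    (d e : ℕ) (T p L : ℝ) (hp : 1 ≤ p) (hL : 0 ≤ L)
    (f : EuclideanSpace ℝ (Fin e) → (EuclideanSpace ℝ (Fin d) →L[ℝ] EuclideanSpace ℝ (Fin e)))
    (hf : ContDiff ℝ 1 f)
    (hflip : ∀ v w, ‖f v - f w‖ ≤ L * ‖v - w‖)
    (hDflip : ∀ v w, ‖fderiv ℝ f v - fderiv ℝ f w‖ ≤ L * ‖v - w‖)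
    (x xs : ℝ → EuclideanSpace ℝ (Fin e))
    (hxfin : HasFiniteVar p x 0 T) (hxsfin : HasFiniteVar p xs 0 T)
    (h0 : x 0 = xs 0) :
    ∀ u v : ℝ, 0 ≤ u → u ≤ v → v ≤ T →
      ‖f (x v) - f (x u) - f (xs v) + f (xs u)‖ ≤
        L * (pVar p (fun t => x t - xs t) u v +
          2 * pVar p xs u v * pVar p (fun t => x t - xs t) 0 T) := by
  intro u v hu huv hvT
  set y := fun t => x t - xs t
  have hp0 : 0 < p := zero_lt_one.trans_le hp
  have hyfin : HasFiniteVar p y 0 T := hxfin.sub hp hxsfin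
  have hyuv : ‖y v - y u‖ ≤ pVar p y u v :=
    norm_sub_le_pVar hp0 (hyfin.mono hp0.le hu hvT) le_rfl huv le_rfl
  have hxsuv : ‖xs v - xs u‖ ≤ pVar p xs u v :=
    norm_sub_le_pVar hp0 (hxsfin.mono hp0.le hu hvT) le_rfl huv le_rfl
  have hyu : ‖x u - xs u‖ ≤ pVar p y 0 T := by
    simpa [y, h0] using norm_sub_le_pVar hp0 hyfin le_rfl hu (huv.trans hvT)
  have hLxs : 0 ≤ L * pVar p xs u v := mul_nonneg hL (pVar_nonneg p xs u v)
  have hslack := mul_nonneg hLxs (pVar_nonneg p y 0 T)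
  calc ‖f (x v) - f (x u) - f (xs v) + f (xs u)‖
      ≤ L * ‖y v - y u‖ + L * ‖xs v - xs u‖ * ‖x u - xs u‖ :=
        norm_sub_sub_add_le_of_lipschitz_fderiv (hf.differentiable one_ne_zero) hflip hDflip _ _ _ _
    _ ≤ L * pVar p y u v + L * pVar p xs u v * pVar p y 0 T := by gcongr
    _ ≤ L * (pVar p y u v + 2 * pVar p xs u v * pVar p y 0 T) := by linarith

theorem composition_difference_estimate
    (d e : ℕ) (T p L : ℝ) (hT : 0 < T) (hp : 1 ≤ p) (hL : 0 ≤ L)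
    (f : EuclideanSpace ℝ (Fin e) → (EuclideanSpace ℝ (Fin d) →L[ℝ] EuclideanSpace ℝ (Fin e)))
    (hf : ContDiff ℝ 1 f)
    (hfb : ∀ v, ‖f v‖ ≤ L)
    (hflip : ∀ v w, ‖f v - f w‖ ≤ L * ‖v - w‖)
    (hDfb : ∀ v, ‖fderiv ℝ f v‖ ≤ L)
    (hDflip : ∀ v w, ‖fderiv ℝ f v - fderiv ℝ f w‖ ≤ L * ‖v - w‖)
    (x xs : ℝ → EuclideanSpace ℝ (Fin e))
    (hx : ContinuousOn x (Set.Icc 0 T)) (hxs : ContinuousOn xs (Set.Icc 0 T))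
    (hxfin : HasFiniteVar p x 0 T) (hxsfin : HasFiniteVar p xs 0 T)
    (h0 : x 0 = xs 0) :
    ∀ u v : ℝ, 0 ≤ u → u ≤ v → v ≤ T →
      ‖f (x v) - f (x u) - f (xs v) + f (xs u)‖ ≤
        L * (pVar p (fun t => x t - xs t) u v +
          2 * pVar p xs u v * pVar p (fun t => x t - xs t) 0 T) :=
  composition_difference_estimate_general d e T p L hp hL f hf hflip hDflip x xs hxfin hxsfin h0
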